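/- Let φ ∈ ℝ and let f : (0,∞) → ℝ be differentiable. Then F_{φ,f} is differentiable on ℝ²∖{0} and its scalar curl satisfies, for every q ≠ 0, ∇^⊥·F_{φ,f}(q) = ∂₁(F_{φ,f})₂(q) − ∂₂(F_{φ,f})₁(q) = sin(φ) · (2 f(‖q‖) + ‖q‖ f'(‖q‖)). -/

import Mathlib

open Filter Set

noncomputable section

abbrev V2 : Type := EuclideanSpace ℝ (Fin 2)

/-- Rotation of `ℝ²` by angle `φ`. -/
def Rot (φ : ℝ) (q : V2) : V2 :=
  !₂[Real.cos φ * q 0 - Real.sin φ * q 1, Real.sin φ * q 0 + Real.cos φ * q 1]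

/-- The kernel `F_{φ,f}(q) = f(‖q‖) R_φ q`. -/
def Fpf (φ : ℝ) (f : ℝ → ℝ) (q : V2) : V2 := f ‖q‖ • Rot φ q

/-- The partial derivative `∂ⱼ Fₖ (q)`. -/
def pderiv2 (F : V2 → V2) (j k : Fin 2) (q : V2) : ℝ :=
  fderiv ℝ F q (EuclideanSpace.single j 1) k

/-- The divergence `∇·F = ∂₁F₁ + ∂₂F₂`. -/
def divF (F : V2 → V2) (q : V2) : ℝ := pderiv2 F 0 0 q + pderiv2 F 1 1 q

/-- The scalar curl `∇^⊥·F = ∂₁F₂ − ∂₂F₁`. -/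
def curlF (F : V2 → V2) (q : V2) : ℝ := pderiv2 F 0 1 q - pderiv2 F 1 0 q

end

/-!
Away from the origin `F_{φ,f} = (f ∘ ‖·‖) • R_φ`, so by the product rule its derivative at `q` is
`f(‖q‖) R_φ` plus the rank-one map `v ↦ (f'(‖q‖)/‖q‖) ⟪q, v⟫ R_φ q`. The curl of a linear map is
linear in it; that of `R_φ` is `2 sin φ`, and that of the rank-one part is
`f'(‖q‖)/‖q‖ · (q × R_φ q) = f'(‖q‖) ‖q‖ sin φ`.
-/

open Real

section InnerProductSpace

variable {E : Type*} [NormedAddCommGroup E] [InnerProductSpace ℝ E]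

theorem hasFDerivAt_norm_of_ne_zero {x : E} (hx : x ≠ 0) :
    HasFDerivAt (‖·‖) (‖x‖⁻¹ • innerSL ℝ x) x := by
  have hsqrt := (hasStrictFDerivAt_norm_sq x).hasFDerivAt.sqrt (by positivity)
  simp only [Real.sqrt_sq (norm_nonneg _)] at hsqrt
  convert hsqrt using 1
  ext v
  simp only [smul_apply, innerSL_apply_apply, nsmul_eq_mul, smul_eq_mul]
  field_simp
  ring

end InnerProductSpace

noncomputable def rotCLM (φ : ℝ) : V2 →L[ℝ] V2 :=
  LinearMap.toContinuousLinearMap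
    { toFun := Rot φ
      map_add' := fun x y => by ext i; fin_cases i <;> simp [Rot] <;> ring
      map_smul' := fun c x => by ext i; fin_cases i <;> simp [Rot] <;> ring }

@[simp]
theorem rotCLM_apply (φ : ℝ) (q : V2) : rotCLM φ q = Rot φ q := rfl

theorem hasFDerivAt_Fpf {φ : ℝ} {f : ℝ → ℝ} {f' : ℝ} {q : V2} (hq : q ≠ 0)
    (hf : HasDerivAt f f' ‖q‖) :
    HasFDerivAt (Fpf φ f)
      (f ‖q‖ • rotCLM φ + (f' * ‖q‖⁻¹) • (innerSL ℝ q).smulRight (Rot φ q)) q := by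
  have hradial : HasFDerivAt (fun x : V2 => f ‖x‖) (f' • ‖q‖⁻¹ • innerSL ℝ q) q :=
    hf.comp_hasFDerivAt q (hasFDerivAt_norm_of_ne_zero hq)
  refine (hradial.smul (rotCLM φ).hasFDerivAt).congr_fderiv ?_
  ext v : 1
  simp [mul_smul]

noncomputable def curlCLM (A : V2 →L[ℝ] V2) : ℝ :=
  A (EuclideanSpace.single 0 1) 1 - A (EuclideanSpace.single 1 1) 0

theorem curlF_eq_curlCLM {F : V2 → V2} {A : V2 →L[ℝ] V2} {q : V2} (hF : HasFDerivAt F A q) :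
    curlF F q = curlCLM A := by
  rw [curlF, pderiv2, pderiv2, hF.fderiv, curlCLM]

theorem curlCLM_add (A B : V2 →L[ℝ] V2) : curlCLM (A + B) = curlCLM A + curlCLM B := by
  simp only [curlCLM, add_apply, PiLp.add_apply]
  ring

theorem curlCLM_smul (c : ℝ) (A : V2 →L[ℝ] V2) : curlCLM (c • A) = c * curlCLM A := by
  simp only [curlCLM, smul_apply, PiLp.smul_apply, smul_eq_mul]
  ring

theorem curlCLM_rotCLM (φ : ℝ) : curlCLM (rotCLM φ) = 2 * sin φ := by
  simp [curlCLM, Rot]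
  ring

theorem curlCLM_smulRight_innerSL (p v : V2) :
    curlCLM ((innerSL ℝ p).smulRight v) = p 0 * v 1 - p 1 * v 0 := by
  simp [curlCLM, EuclideanSpace.inner_single_right]

theorem cross_Rot_self (φ : ℝ) (q : V2) : q 0 * Rot φ q 1 - q 1 * Rot φ q 0 = sin φ * ‖q‖ ^ 2 := by
  rw [EuclideanSpace.norm_sq_eq, Fin.sum_univ_two]
  simp [Rot]
  ring

/-- `F_{φ,f}` is differentiable away from the origin and its
scalar curl is `sin φ · (2 f(‖q‖) + ‖q‖ f'(‖q‖))`. -/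
theorem curl_Fpf (φ : ℝ) (f : ℝ → ℝ)
    (hf : ∀ x : ℝ, 0 < x → DifferentiableAt ℝ f x) :
    ∀ q : V2, q ≠ 0 →
      DifferentiableAt ℝ (Fpf φ f) q ∧
      curlF (Fpf φ f) q = Real.sin φ * (2 * f ‖q‖ + ‖q‖ * deriv f ‖q‖) := by
  intro q hq
  have hnorm : ‖q‖ ≠ 0 := norm_ne_zero_iff.mpr hq
  have hF := hasFDerivAt_Fpf (φ := φ) hq (hf ‖q‖ (norm_pos_iff.mpr hq)).hasDerivAt
  refine ⟨hF.differentiableAt, ?_⟩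
  rw [curlF_eq_curlCLM hF, curlCLM_add, curlCLM_smul, curlCLM_smul, curlCLM_rotCLM,
    curlCLM_smulRight_innerSL, cross_Rot_self]
  field_simp
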